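/- arXiv:2210.08230 — 3 statements merged into one kernel-verified Lean document; each statement's English description precedes it below -/
import Mathlib

section
/- Let k be a commutative ring with identity, A a unital k-algebra, and ε : A → k a weak augmentation. Let K = ker ε, endowed with the multiplication μ_K(x,y) = xy − ε(xy)·1_A (which lies in K) and the k-bilinear form b_K(x,y) = −ε(xy). Then the map (K,b_K)@k → A defined by (x,λ) ↦ x + λ·1_A is an isomorphism of unital k-algebras (a k-linear multiplicative bijection sending (0,1) to 1_A). -/
/-- Let `k` be a commutative ring, `A` a unital (not necessarily associative)
`k`-algebra with multiplication `μ` and identity `one`, and `ε : A → k` a weak augmentation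
(`k`-linear with `ε (c • one) = c`). Let `K = ker ε` with multiplication
`μ_K x y = μ x y - ε (μ x y) • one` (which lies in `K`) and bilinear form
`b_K x y = -ε (μ x y)`. Then the map `(K,b_K)@k → A`, `(x,c) ↦ x + c • one`, is an
isomorphism of unital `k`-algebras. -/
theorem stmt5 (k A : Type*) [CommRing k] [AddCommGroup A] [Module k A]
    (μ : A →ₗ[k] A →ₗ[k] A) (one : A)
    (hone : ∀ a : A, μ one a = a ∧ μ a one = a)
    (ε : A →ₗ[k] k)
    (hεc : ∀ c : k, ε (c • one) = c) :
    ∃ f : (↥(LinearMap.ker ε) × k) →ₗ[k] A,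
      (∀ (x : ↥(LinearMap.ker ε)) (c : k), f (x, c) = (x : A) + c • one) ∧
      Function.Bijective f ∧
      f ((0 : ↥(LinearMap.ker ε)), (1 : k)) = one ∧
      (∀ (x x' : ↥(LinearMap.ker ε)) (c c' : k),
        f ((⟨μ (x : A) (x' : A) - ε (μ (x : A) (x' : A)) • one, by
              rw [LinearMap.mem_ker, map_sub, hεc, sub_self]⟩ : ↥(LinearMap.ker ε))
            + c • x' + c' • x,
           c * c' - -ε (μ (x : A) (x' : A)))
          = μ (f (x, c)) (f (x', c'))) := by
  refine ⟨(LinearMap.ker ε).subtype.coprod (LinearMap.toSpanSingleton k A one), ?_, ?_, ?_, ?_⟩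
  · intro x c; rfl
  · constructor
    · intro ⟨x, c⟩ ⟨x', c'⟩ h
      simp only [LinearMap.coprod_apply, Submodule.coe_subtype,
        LinearMap.toSpanSingleton_apply] at h
      have hc : c = c' := by
        have := congrArg ε h
        simpa [hεc, LinearMap.mem_ker.mp x.2, LinearMap.mem_ker.mp x'.2] using this
      subst hc
      have hx : (x : A) = (x' : A) := by
        have := add_right_cancel h
        exact this
      exact Prod.ext (Subtype.ext hx) rfl
    · intro a
      refine ⟨(⟨a - ε a • one, by rw [LinearMap.mem_ker, map_sub, hεc, sub_self]⟩, ε a), ?_⟩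
      simp [LinearMap.toSpanSingleton_apply]
  · simp [LinearMap.toSpanSingleton_apply]
  · intro x x' c c'
    simp only [LinearMap.coprod_apply, Submodule.coe_subtype,
      LinearMap.toSpanSingleton_apply, Submodule.coe_add, Submodule.coe_smul]
    have h1 := (hone ((x' : A))).1
    have h2 := (hone ((x : A))).2
    have h3 := (hone one).1
    simp only [map_add, map_smul, LinearMap.add_apply, LinearMap.smul_apply, h1, h2, h3]
    rw [sub_neg_eq_add]
    module
end

section
/- Let k be a commutative ring with identity and (R,b) a k-algebra with a bilinear form. The multiplication of (R,b)@k, defined on R ⊕ k by (r,λ)(r',λ') = (rr' + λr' + λ'r, λλ' − b(r,r')), is associative if and only if for all x,y,z ∈ R both b(xy, z) = b(x, yz) and (xy)z − b(x,y)·z = x(yz) − b(y,z)·x hold. -/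
/-- For a `k`-algebra `R` (multiplication `μ`) with a bilinear form `b`, the multiplication of
the extension `(R,b)@k` on `R ⊕ k`: `(r,c)(r',c') = (rr' + c • r' + c' • r, cc' - b r r')`. -/
def atMul {k R : Type*} [CommRing k] [AddCommGroup R] [Module k R]
    (μ : R →ₗ[k] R →ₗ[k] R) (b : R →ₗ[k] R →ₗ[k] k) (p q : R × k) : R × k :=
  (μ p.1 q.1 + p.2 • q.1 + q.2 • p.1, p.2 * q.2 - b p.1 q.1)

/-- The multiplication of `(R,b)@k` is associative iff for all `x, y, z ∈ R`
both `b (xy) z = b x (yz)` and `(xy)z - b x y • z = x(yz) - b y z • x` hold. -/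
theorem stmt10 (k R : Type*) [CommRing k] [AddCommGroup R] [Module k R]
    (μ : R →ₗ[k] R →ₗ[k] R) (b : R →ₗ[k] R →ₗ[k] k) :
    (∀ p q r : R × k, atMul μ b (atMul μ b p q) r = atMul μ b p (atMul μ b q r)) ↔
      ∀ x y z : R, b (μ x y) z = b x (μ y z) ∧
        μ (μ x y) z - b x y • z = μ x (μ y z) - b y z • x := by
  constructor
  · intro h x y z
    have := h (x, 0) (y, 0) (z, 0)
    simp only [atMul, Prod.mk.injEq, zero_smul, add_zero, zero_mul, mul_zero, zero_sub,
      neg_inj, smul_zero, zero_add] at this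
    obtain ⟨h1, h2⟩ := this
    refine ⟨h2, ?_⟩
    simpa [map_sub, map_neg, map_smul, sub_eq_add_neg, neg_smul] using h1
  · intro h p q r
    obtain ⟨x, a⟩ := p
    obtain ⟨y, c⟩ := q
    obtain ⟨z, d⟩ := r
    obtain ⟨h1, h2⟩ := h x y z
    simp only [atMul, Prod.mk.injEq, map_add, map_smul, map_sub, LinearMap.add_apply,
      LinearMap.smul_apply, LinearMap.sub_apply, smul_eq_mul]
    constructor
    · have h2' := sub_eq_sub_iff_add_eq_add.mp h2
      linear_combination (norm := module) h2'
    · linear_combination -h1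
end

section
/- Let k be a commutative ring with identity and (R,b) a k-algebra with a bilinear form such that the multiplication of A := (R,b)@k is associative (so A is an associative unital k-algebra). Let f : T(R) → A be the unique unital k-algebra homomorphism from the tensor algebra T(R) of the underlying k-module of R to A satisfying f(ι(r)) = (r,0) for all r ∈ R, where ι : R → T(R) is the canonical inclusion. Then f is surjective and its kernel equals the two-sided ideal of T(R) generated by the set of elements b(x,y)·1 − ι(xy) + ι(x)ι(y), for x,y ∈ R. Consequently T(R)/I ≅ (R,b)@k as unital k-algebras. -/
section

variable {k R : Type*} [CommRing k] [AddCommGroup R] [Module k R]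
  (μ : R →ₗ[k] R →ₗ[k] R) (b : R →ₗ[k] R →ₗ[k] k)

@[simp]
lemma atMul_zero_left (q : R × k) : atMul μ b 0 q = 0 := by
  simp [atMul]

@[simp]
lemma atMul_zero_right (p : R × k) : atMul μ b p 0 = 0 := by
  simp [atMul]

def atRelations : Set (TensorAlgebra k R) :=
  {t | ∃ r r' : R, t = algebraMap k (TensorAlgebra k R) (b r r')
    - TensorAlgebra.ι k (μ r r') + TensorAlgebra.ι k r * TensorAlgebra.ι k r'}

variable (k R) in
def atSection : R × k →ₗ[k] TensorAlgebra k R :=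
  (TensorAlgebra.ι k).coprod (Algebra.linearMap k (TensorAlgebra k R))

lemma atSection_apply (p : R × k) :
    atSection k R p = TensorAlgebra.ι k p.1 + algebraMap k (TensorAlgebra k R) p.2 :=
  rfl

lemma atSection_mul_sub_atSection_atMul (p q : R × k) :
    atSection k R p * atSection k R q - atSection k R (atMul μ b p q) =
      algebraMap k (TensorAlgebra k R) (b p.1 q.1)
        - TensorAlgebra.ι k (μ p.1 q.1) + TensorAlgebra.ι k p.1 * TensorAlgebra.ι k q.1 := by
  simp only [atSection_apply, atMul, map_add, map_sub, map_smul, add_mul, mul_add,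
    Algebra.algebraMap_eq_smul_one, smul_mul_assoc, mul_smul_comm, one_mul, mul_one]
  module

lemma atSection_mul_sub_atSection_atMul_mem (p q : R × k) :
    atSection k R p * atSection k R q - atSection k R (atMul μ b p q) ∈
      TwoSidedIdeal.span (atRelations μ b) := by
  rw [atSection_mul_sub_atSection_atMul]
  exact TwoSidedIdeal.subset_span ⟨p.1, q.1, rfl⟩

variable {μ b} {f : TensorAlgebra k R →ₗ[k] R × k}

lemma map_atSection (hf1 : f 1 = (0, 1)) (hfι : ∀ r : R, f (TensorAlgebra.ι k r) = (r, 0))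
    (p : R × k) : f (atSection k R p) = p := by
  rw [atSection_apply, map_add, hfι, Algebra.algebraMap_eq_smul_one, map_smul, hf1]
  ext <;> simp

lemma sub_atSection_mem_span_atRelations (hf1 : f 1 = (0, 1))
    (hfmul : ∀ x y : TensorAlgebra k R, f (x * y) = atMul μ b (f x) (f y))
    (hfι : ∀ r : R, f (TensorAlgebra.ι k r) = (r, 0)) (x : TensorAlgebra k R) :
    x - atSection k R (f x) ∈ TwoSidedIdeal.span (atRelations μ b) := by
  set I := TwoSidedIdeal.span (atRelations μ b)
  induction x using TensorAlgebra.induction with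
  | algebraMap c =>
    have hc : algebraMap k (TensorAlgebra k R) c = atSection k R (0, c) := by
      simp [atSection_apply]
    rw [hc, map_atSection hf1 hfι, sub_self]
    exact I.zero_mem
  | ι r =>
    have hr : TensorAlgebra.ι k r = atSection k R (r, 0) := by
      simp [atSection_apply]
    rw [hr, map_atSection hf1 hfι, sub_self]
    exact I.zero_mem
  | mul x y hx hy =>
    have hsplit : x * y - atSection k R (f (x * y)) =
        (x - atSection k R (f x)) * y + atSection k R (f x) * (y - atSection k R (f y)) +
          (atSection k R (f x) * atSection k R (f y)
            - atSection k R (atMul μ b (f x) (f y))) := by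
      rw [hfmul]; noncomm_ring
    rw [hsplit]
    exact I.add_mem (I.add_mem (I.mul_mem_right _ _ hx) (I.mul_mem_left _ _ hy))
      (atSection_mul_sub_atSection_atMul_mem μ b _ _)
  | add x y hx hy =>
    rw [map_add, map_add, add_sub_add_comm]
    exact I.add_mem hx hy

lemma map_eq_zero_of_mem_span_atRelations (hf1 : f 1 = (0, 1))
    (hfmul : ∀ x y : TensorAlgebra k R, f (x * y) = atMul μ b (f x) (f y))
    (hfι : ∀ r : R, f (TensorAlgebra.ι k r) = (r, 0)) {x : TensorAlgebra k R}
    (hx : x ∈ TwoSidedIdeal.span (atRelations μ b)) : f x = 0 := by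
  induction hx using TwoSidedIdeal.span_induction with
  | mem t ht =>
    obtain ⟨r, r', rfl⟩ := ht
    rw [← atSection_mul_sub_atSection_atMul μ b (r, 0) (r', 0), map_sub, hfmul,
      map_atSection hf1 hfι, map_atSection hf1 hfι, map_atSection hf1 hfι, sub_self]
  | zero => exact map_zero f
  | add x y _ _ hx hy => rw [map_add, hx, hy, add_zero]
  | neg x _ hx => rw [map_neg, hx, neg_zero]
  | left_absorb a x _ hx => rw [hfmul, hx, atMul_zero_right]
  | right_absorb a x _ hx => rw [hfmul, hx, atMul_zero_left]

end

theorem stmt11_general (k R : Type*) [CommRing k] [AddCommGroup R] [Module k R]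
    (μ : R →ₗ[k] R →ₗ[k] R) (b : R →ₗ[k] R →ₗ[k] k)
    (f : TensorAlgebra k R →ₗ[k] R × k)
    (hf1 : f 1 = ((0 : R), (1 : k)))
    (hfmul : ∀ x y : TensorAlgebra k R, f (x * y) = atMul μ b (f x) (f y))
    (hfι : ∀ r : R, f (TensorAlgebra.ι k r) = (r, (0 : k))) :
    Function.Surjective f ∧
    ∀ x : TensorAlgebra k R, f x = 0 ↔
      x ∈ TwoSidedIdeal.span
        {t : TensorAlgebra k R | ∃ r r' : R,
          t = algebraMap k (TensorAlgebra k R) (b r r')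
              - TensorAlgebra.ι k (μ r r') + TensorAlgebra.ι k r * TensorAlgebra.ι k r'} := by
  refine ⟨fun p => ⟨atSection k R p, map_atSection hf1 hfι p⟩, fun x => ⟨fun hx => ?_,
    map_eq_zero_of_mem_span_atRelations hf1 hfmul hfι⟩⟩
  have hmem := sub_atSection_mem_span_atRelations hf1 hfmul hfι x
  rwa [hx, map_zero, sub_zero] at hmem

/-- Suppose the multiplication of `A := (R,b)@k` is associative, and let
`f : T(R) → A` be the (unique) unital `k`-algebra homomorphism from the tensor algebra of the
`k`-module `R` to `A` with `f (ι r) = (r, 0)` for all `r`. Then `f` is surjective and its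
kernel is the two-sided ideal of `T(R)` generated by the elements
`b x y • 1 - ι (μ x y) + ι x * ι y` for `x, y ∈ R`; consequently `T(R)/I ≅ (R,b)@k`. -/
theorem stmt11 (k R : Type*) [CommRing k] [AddCommGroup R] [Module k R]
    (μ : R →ₗ[k] R →ₗ[k] R) (b : R →ₗ[k] R →ₗ[k] k)
    (hassoc : ∀ p q r : R × k, atMul μ b (atMul μ b p q) r = atMul μ b p (atMul μ b q r))
    (f : TensorAlgebra k R →ₗ[k] R × k)
    (hf1 : f 1 = ((0 : R), (1 : k)))
    (hfmul : ∀ x y : TensorAlgebra k R, f (x * y) = atMul μ b (f x) (f y))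
    (hfι : ∀ r : R, f (TensorAlgebra.ι k r) = (r, (0 : k))) :
    Function.Surjective f ∧
    ∀ x : TensorAlgebra k R, f x = 0 ↔
      x ∈ TwoSidedIdeal.span
        {t : TensorAlgebra k R | ∃ r r' : R,
          t = algebraMap k (TensorAlgebra k R) (b r r')
              - TensorAlgebra.ι k (μ r r') + TensorAlgebra.ι k r * TensorAlgebra.ι k r'} :=
  stmt11_general k R μ b f hf1 hfmul hfι
end
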